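/- Let η ∈ [0,1]. For all m, d ∈ ℝ², one has ψ̃(e_1, m − d) + ψ̃(e_2, m + d) + ψ̃(e_1 − e_2, d) ≥ ψ̃(e_1, m) + ψ̃(e_2, m). -/

import Mathlib

/-- The positively one-homogeneous extension
`ψ̃(b,T) = |T||b|² + η (b·T)²/|T|`, with `ψ̃(b,0) = 0`. -/
noncomputable def psiT (n : ℕ) (η : ℝ) (b T : EuclideanSpace ℝ (Fin n)) : ℝ :=
  ‖T‖ * ‖b‖ ^ 2 + η * (inner ℝ b T : ℝ) ^ 2 / ‖T‖


/-- Core polynomial inequality on unit vectors: subgradient property of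
`t ↦ 1 + η t₁²` style functional. -/
private lemma core1 (η c s p q : ℝ) (hη0 : 0 ≤ η) (hη1 : η ≤ 1)
    (hu : c^2 + s^2 = 1) (ht : p^2 + q^2 = 1) :
    (c + η*c*(2 - c^2)) * p + s*(1 - η*c^2) * q ≤ 1 + η * p^2 := by
  have hA : c*p + s*q - 1 ≤ 0 := by nlinarith [sq_nonneg (c-p), sq_nonneg (s-q)]
  have hAB : (c*p + s*q - 1) + (2*c*p - c^3*p - c^2*s*q - p^2) ≤ 0 := by
    nlinarith [sq_nonneg (c-p), mul_nonneg (sq_nonneg s)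
      (by nlinarith [sq_nonneg (c-p), sq_nonneg (s-q)] : (0:ℝ) ≤ 1 - (c*p+s*q))]
  nlinarith [mul_nonneg hη0 (neg_nonneg.2 hAB), mul_nonneg (sub_nonneg.2 hη1) (neg_nonneg.2 hA)]

private lemma linA (η c s x y : ℝ) (hη0 : 0 ≤ η) (hη1 : η ≤ 1) (hu : c^2 + s^2 = 1) :
    (c + η*c*(2 - c^2)) * x + s*(1 - η*c^2) * y ≤
      Real.sqrt (x^2 + y^2) + η * x^2 / Real.sqrt (x^2 + y^2) := by
  rcases eq_or_ne (Real.sqrt (x^2 + y^2)) 0 with h0 | h0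
  · have hxy : x^2 + y^2 ≤ 0 := Real.sqrt_eq_zero'.mp h0
    have hx : x = 0 := by nlinarith [sq_nonneg x, sq_nonneg y]
    have hy : y = 0 := by nlinarith [sq_nonneg x, sq_nonneg y]
    subst hx; subst hy
    simp
  · have hpos : 0 < Real.sqrt (x^2 + y^2) :=
      lt_of_le_of_ne (Real.sqrt_nonneg _) (Ne.symm h0)
    set n := Real.sqrt (x^2 + y^2) with hn
    have hn2 : n^2 = x^2 + y^2 := Real.sq_sqrt (by positivity)
    have ht : (x/n)^2 + (y/n)^2 = 1 := by
      field_simp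
      linarith [hn2]
    have h := core1 η c s (x/n) (y/n) hη0 hη1 hu ht
    have h2 := mul_le_mul_of_nonneg_left h (le_of_lt hpos)
    calc (c + η*c*(2 - c^2)) * x + s*(1 - η*c^2) * y
        = n * ((c + η*c*(2 - c^2)) * (x/n) + s*(1 - η*c^2) * (y/n)) := by
          field_simp
      _ ≤ n * (1 + η * (x/n)^2) := h2
      _ = n + η * x^2 / n := by field_simp

private lemma linC (η c s x y : ℝ) (hη0 : 0 ≤ η) (hη1 : η ≤ 1) (hu : c^2 + s^2 = 1) :
    η*(c*(1+2*s^2))*x - η*(s*(1+2*c^2))*y ≤ 2 * Real.sqrt (x^2 + y^2) := by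
  set n := Real.sqrt (x^2 + y^2) with hn
  have hn0 : 0 ≤ n := Real.sqrt_nonneg _
  have hn2 : n^2 = x^2 + y^2 := Real.sq_sqrt (by positivity)
  have hη2 : η^2 ≤ 1 := by nlinarith
  have hv : (η*(c*(1+2*s^2)))^2 + (η*(s*(1+2*c^2)))^2 ≤ 4 := by
    nlinarith [sq_nonneg (c^2 - s^2), sq_nonneg η,
      mul_nonneg (sq_nonneg η) (by nlinarith [sq_nonneg (c^2 - s^2)] : (0:ℝ) ≤ 3 - 12*(c*s)^2),
      sq_nonneg (c*s)]
  have hcs : (η*(c*(1+2*s^2))*x - η*(s*(1+2*c^2))*y)^2 ≤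
      ((η*(c*(1+2*s^2)))^2 + (η*(s*(1+2*c^2)))^2) * (x^2 + y^2) := by
    nlinarith [sq_nonneg (η*(c*(1+2*s^2))*y + η*(s*(1+2*c^2))*x)]
  nlinarith [hcs, hv, hn0, hn2, mul_le_mul_of_nonneg_right hv (by positivity : (0:ℝ) ≤ x^2 + y^2)]

private lemma main_real (η m1 m2 d1 d2 : ℝ) (hη0 : 0 ≤ η) (hη1 : η ≤ 1) :
    (2 + η) * Real.sqrt (m1^2 + m2^2) ≤
      (Real.sqrt ((m1-d1)^2 + (m2-d2)^2)
        + η * (m1-d1)^2 / Real.sqrt ((m1-d1)^2 + (m2-d2)^2))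
      + (Real.sqrt ((m1+d1)^2 + (m2+d2)^2)
        + η * (m2+d2)^2 / Real.sqrt ((m1+d1)^2 + (m2+d2)^2))
      + (2 * Real.sqrt (d1^2 + d2^2) + η * (d1-d2)^2 / Real.sqrt (d1^2 + d2^2)) := by
  rcases eq_or_ne (Real.sqrt (m1^2 + m2^2)) 0 with h0 | h0
  · rw [h0]
    have t1 : 0 ≤ Real.sqrt ((m1-d1)^2 + (m2-d2)^2)
        + η * (m1-d1)^2 / Real.sqrt ((m1-d1)^2 + (m2-d2)^2) := by positivity
    have t2 : 0 ≤ Real.sqrt ((m1+d1)^2 + (m2+d2)^2)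
        + η * (m2+d2)^2 / Real.sqrt ((m1+d1)^2 + (m2+d2)^2) := by positivity
    have t3 : 0 ≤ 2 * Real.sqrt (d1^2 + d2^2) + η * (d1-d2)^2 / Real.sqrt (d1^2 + d2^2) := by
      positivity
    linarith
  · set r := Real.sqrt (m1^2 + m2^2) with hrdef
    have hrpos : 0 < r := lt_of_le_of_ne (Real.sqrt_nonneg _) (Ne.symm h0)
    have hr2 : r^2 = m1^2 + m2^2 := Real.sq_sqrt (by positivity)
    set c := m1 / r with hc
    set s := m2 / r with hs
    have hu : c^2 + s^2 = 1 := by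
      rw [hc, hs]; field_simp; linarith [hr2]
    have hm1 : m1 = c * r := by rw [hc]; field_simp
    have hm2 : m2 = s * r := by rw [hs]; field_simp
    have h1 := linA η c s (m1 - d1) (m2 - d2) hη0 hη1 hu
    have h2 := linA η s c (m2 + d2) (m1 + d1) hη0 hη1 (by linarith : s^2 + c^2 = 1)
    have e2 : (m2+d2)^2 + (m1+d1)^2 = (m1+d1)^2 + (m2+d2)^2 := by ring
    rw [e2] at h2
    have h3 := linC η c s d1 d2 hη0 hη1 hu
    have h4 : 0 ≤ η * (d1-d2)^2 / Real.sqrt (d1^2 + d2^2) := by positivity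
    have key : (c + η*c*(2 - c^2)) * (m1 - d1) + s*(1 - η*c^2) * (m2 - d2)
        + ((s + η*s*(2 - s^2)) * (m2 + d2) + c*(1 - η*s^2) * (m1 + d1))
        + (η*(c*(1+2*s^2))*d1 - η*(s*(1+2*c^2))*d2) = (2 + η) * r := by
      rw [hm1, hm2]
      linear_combination (r*(2 - η*(c^2+s^2-1)) + η*c*d1 - η*s*d2) * hu
    linarith [h1, h2, h3, h4, key]

/-- For all `m, d ∈ ℝ²`:
`ψ̃(e₁, m−d) + ψ̃(e₂, m+d) + ψ̃(e₁−e₂, d) ≥ ψ̃(e₁, m) + ψ̃(e₂, m)`. -/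
theorem psiT_two_dim_inequality (η : ℝ) (hη : η ∈ Set.Icc (0 : ℝ) 1)
    (m d : EuclideanSpace ℝ (Fin 2)) :
    psiT 2 η (EuclideanSpace.single 0 1) m + psiT 2 η (EuclideanSpace.single 1 1) m ≤
      psiT 2 η (EuclideanSpace.single 0 1) (m - d) +
        psiT 2 η (EuclideanSpace.single 1 1) (m + d) +
        psiT 2 η ((EuclideanSpace.single 0 1 : EuclideanSpace ℝ (Fin 2)) -
          EuclideanSpace.single 1 1) d := by
  obtain ⟨hη0, hη1⟩ := hη
  have hnorm : ∀ T : EuclideanSpace ℝ (Fin 2), ‖T‖ = Real.sqrt ((T 0)^2 + (T 1)^2) := by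
    intro T
    rw [EuclideanSpace.norm_eq]
    simp [Fin.sum_univ_two, Real.norm_eq_abs, sq_abs]
  have hb1 : ‖(EuclideanSpace.single 0 1 : EuclideanSpace ℝ (Fin 2))‖ = 1 := by
    simp [EuclideanSpace.norm_single]
  have hb2 : ‖(EuclideanSpace.single 1 1 : EuclideanSpace ℝ (Fin 2))‖ = 1 := by
    simp [EuclideanSpace.norm_single]
  have hcomp : ((EuclideanSpace.single 0 1 - EuclideanSpace.single 1 1 :
        EuclideanSpace ℝ (Fin 2)) 0)^2 + ((EuclideanSpace.single 0 1 -
        EuclideanSpace.single 1 1 : EuclideanSpace ℝ (Fin 2)) 1)^2 = 2 := by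
    simp [EuclideanSpace.single_apply]
    norm_num
  have hb12 : Real.sqrt (((EuclideanSpace.single 0 1 - EuclideanSpace.single 1 1 :
        EuclideanSpace ℝ (Fin 2)) 0)^2 + ((EuclideanSpace.single 0 1 -
        EuclideanSpace.single 1 1 : EuclideanSpace ℝ (Fin 2)) 1)^2) ^ 2 = 2 := by
    rw [hcomp]
    exact Real.sq_sqrt (by norm_num)
  have hi1 : ∀ T : EuclideanSpace ℝ (Fin 2),
      (inner ℝ (EuclideanSpace.single 0 1) T : ℝ) = T 0 := by
    intro T; simp [EuclideanSpace.inner_single_left]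
  have hi2 : ∀ T : EuclideanSpace ℝ (Fin 2),
      (inner ℝ (EuclideanSpace.single 1 1) T : ℝ) = T 1 := by
    intro T; simp [EuclideanSpace.inner_single_left]
  have hi12 : (inner ℝ ((EuclideanSpace.single 0 1 : EuclideanSpace ℝ (Fin 2))
      - EuclideanSpace.single 1 1) d : ℝ) = d 0 - d 1 := by
    rw [inner_sub_left, hi1, hi2]
  have hmd : ∀ i, (m - d) i = m i - d i := fun i => rfl
  have hmpd : ∀ i, (m + d) i = m i + d i := fun i => rfl
  simp only [psiT, hb1, hb2, hi1, hi2, hi12, hnorm, hmd, hmpd, hb12,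
    one_pow, mul_one]
  -- LHS simplification
  set r := Real.sqrt ((m 0)^2 + (m 1)^2) with hr
  have hlhs : η * (m 0)^2 / r + η * (m 1)^2 / r = η * r := by
    rcases eq_or_ne r 0 with h0 | h0
    · have hxy : (m 0)^2 + (m 1)^2 ≤ 0 := Real.sqrt_eq_zero'.mp h0
      have hx : m 0 = 0 := by nlinarith [sq_nonneg (m 0), sq_nonneg (m 1)]
      have hy : m 1 = 0 := by nlinarith [sq_nonneg (m 0), sq_nonneg (m 1)]
      rw [h0, hx, hy]; norm_num
    · have hr2 : r^2 = (m 0)^2 + (m 1)^2 := Real.sq_sqrt (by positivity)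
      have hsum : η * (m 0)^2 + η * (m 1)^2 = η * r * r := by
        linear_combination (-η) * hr2
      rw [← add_div, hsum, mul_div_assoc, div_self h0, mul_one]
  have hmr := main_real η (m 0) (m 1) (d 0) (d 1) hη0 hη1
  rw [← hr] at hmr
  linarith [hmr, hlhs]
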